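/- For Markovian SIR dynamics with infection rate τ > 0 and recovery rate γ > 0 on the open triplet, started from any pure initial configuration x⁰ = (A⁰, S, C⁰) whose middle node 2 is susceptible, the unclustered closure is exact on all states whose middle node is susceptible: for all A, C ∈ Fin 3 and all t ≥ 0, P_{123}(A,S,C;t) · P_2(S;t) = P_{12}(A,S;t) · P_{23}(S,C;t). -/

import Mathlib

/-!
Once the middle node has left `S` it never returns, so no transition enters the set of
configurations with susceptible middle node, and on that set `exp (t Q)` is the exponential of
the restricted generator. There the leaves do not interact: each leaf can only recover, and an
infected leaf can only infect the middle node, which merely removes probability mass from the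
set. The restricted generator is therefore the Kronecker sum `L ⊕ L` of a three-state
sub-generator `L`, so `p_t(A, S, C) = N (A⁰, A) * N (C⁰, C)` with `N = exp (t L)`, and every
marginal in the closure factorises accordingly.
-/


open Finset

/-- Rate of a single off-diagonal transition for the Markovian SIR model with states
`0 = S`, `1 = I`, `2 = R`: nonzero only if `y` agrees with `x` except at exactly one node `i`,
where either `S → I` (rate `τ · #infectious neighbours`) or `I → R` (rate `γ`). -/
noncomputable def sirRate {V : Type*} [Fintype V] [DecidableEq V] (G : SimpleGraph V)
    [DecidableRel G.Adj] (τ γ : ℝ) (x y : V → Fin 3) : ℝ :=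
  ∑ i : V,
    ((if (∀ j, j ≠ i → x j = y j) ∧ x i = 0 ∧ y i = 1 then
        τ * ((Finset.univ.filter (fun j => G.Adj i j ∧ x j = 1)).card : ℝ) else 0)
      + (if (∀ j, j ≠ i → x j = y j) ∧ x i = 1 ∧ y i = 2 then γ else 0))

/-- Generator matrix of the Markovian SIR dynamics on configurations `V → Fin 3`. -/
noncomputable def sirGen {V : Type*} [Fintype V] [DecidableEq V] (G : SimpleGraph V)
    [DecidableRel G.Adj] (τ γ : ℝ) : Matrix (V → Fin 3) (V → Fin 3) ℝ :=
  fun x y => if x = y then -∑ z ∈ Finset.univ.erase x, sirRate G τ γ x z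
             else sirRate G τ γ x y

/-- Distribution at time `t` started from the pure configuration `x0`. -/
noncomputable def sirP {V : Type*} [Fintype V] [DecidableEq V] (G : SimpleGraph V)
    [DecidableRel G.Adj] (τ γ : ℝ) (x0 : V → Fin 3) (t : ℝ) (x : V → Fin 3) : ℝ :=
  NormedSpace.exp (t • sirGen G τ γ) x0 x

/-- Single-node marginal `P_i(A;t)`. -/
noncomputable def sirP1 {V : Type*} [Fintype V] [DecidableEq V] (G : SimpleGraph V)
    [DecidableRel G.Adj] (τ γ : ℝ) (x0 : V → Fin 3) (i : V) (A : Fin 3) (t : ℝ) : ℝ :=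
  ∑ x ∈ Finset.univ.filter (fun x : V → Fin 3 => x i = A), sirP G τ γ x0 t x

/-- Pair marginal `P_{ij}(A,B;t)`. -/
noncomputable def sirP2 {V : Type*} [Fintype V] [DecidableEq V] (G : SimpleGraph V)
    [DecidableRel G.Adj] (τ γ : ℝ) (x0 : V → Fin 3) (i j : V) (A B : Fin 3) (t : ℝ) : ℝ :=
  ∑ x ∈ Finset.univ.filter (fun x : V → Fin 3 => x i = A ∧ x j = B), sirP G τ γ x0 t x

/-- Triple marginal `P_{ijk}(A,B,C;t)`. -/
noncomputable def sirP3 {V : Type*} [Fintype V] [DecidableEq V] (G : SimpleGraph V)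
    [DecidableRel G.Adj] (τ γ : ℝ) (x0 : V → Fin 3) (i j k : V) (A B C : Fin 3) (t : ℝ) : ℝ :=
  ∑ x ∈ Finset.univ.filter (fun x : V → Fin 3 => x i = A ∧ x j = B ∧ x k = C),
    sirP G τ γ x0 t x


/-- The open triplet: the graph on nodes `{0,1,2}` (representing `1,2,3`) with edges
`{0,1}` and `{1,2}`; node `1` is the middle node. -/
def openTriplet : SimpleGraph (Fin 3) where
  Adj i j := i ≠ j ∧ (i = 1 ∨ j = 1)
  symm := ⟨fun _ _ h => ⟨h.1.symm, h.2.symm⟩⟩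
  loopless := ⟨fun _ h => h.1 rfl⟩

instance : DecidableRel openTriplet.Adj :=
  fun i j => inferInstanceAs (Decidable (i ≠ j ∧ (i = 1 ∨ j = 1)))

open NormedSpace
open scoped Kronecker Nat

namespace Matrix

variable {α β 𝕜 : Type*} [DecidableEq α] [DecidableEq β]

/-- The generator of two independent Markov chains with generators `A` and `B`. -/
def kroneckerSum [Semiring 𝕜] (A : Matrix α α 𝕜) (B : Matrix β β 𝕜) :
    Matrix (α × β) (α × β) 𝕜 :=
  A ⊗ₖ 1 + 1 ⊗ₖ B

theorem smul_kroneckerSum [CommSemiring 𝕜] (t : 𝕜) (A : Matrix α α 𝕜) (B : Matrix β β 𝕜) :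
    t • kroneckerSum A B = kroneckerSum (t • A) (t • B) := by
  rw [kroneckerSum, kroneckerSum, smul_add, smul_kronecker, kronecker_smul]

variable [Fintype α] [Fintype β]

theorem kronecker_pow [CommSemiring 𝕜] (A : Matrix α α 𝕜) (B : Matrix β β 𝕜) (n : ℕ) :
    (A ⊗ₖ B) ^ n = (A ^ n) ⊗ₖ (B ^ n) := by
  induction n with
  | zero => exact one_kronecker_one.symm
  | succ n ih => rw [pow_succ, pow_succ, pow_succ, ih, mul_kronecker_mul]

theorem hasSum_exp_apply [RCLike 𝕜] (M : Matrix α α 𝕜) (i j : α) :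
    HasSum (fun n => (n !⁻¹ : 𝕜) * (M ^ n) i j) (exp M i j) := by
  open scoped Norms.Operator in
  exact Pi.hasSum.1 (Pi.hasSum.1 (exp_series_hasSum_exp' (𝕂 := 𝕜) M) i) j

theorem exp_kronecker_one [RCLike 𝕜] (A : Matrix α α 𝕜) :
    exp (A ⊗ₖ (1 : Matrix β β 𝕜)) = exp A ⊗ₖ 1 := by
  ext ⟨i, k⟩ ⟨j, l⟩
  have h := hasSum_exp_apply (A ⊗ₖ (1 : Matrix β β 𝕜)) (i, k) (j, l)
  simp only [kronecker_pow, one_pow, kroneckerMap_apply, ← mul_assoc] at h ⊢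
  exact h.unique ((hasSum_exp_apply A i j).mul_right _)

theorem exp_one_kronecker [RCLike 𝕜] (B : Matrix β β 𝕜) :
    exp ((1 : Matrix α α 𝕜) ⊗ₖ B) = 1 ⊗ₖ exp B := by
  ext ⟨i, k⟩ ⟨j, l⟩
  have h := hasSum_exp_apply ((1 : Matrix α α 𝕜) ⊗ₖ B) (i, k) (j, l)
  simp only [kronecker_pow, one_pow, kroneckerMap_apply,
    mul_left_comm _ ((1 : Matrix α α 𝕜) i j)] at h ⊢
  exact h.unique ((hasSum_exp_apply B k l).mul_left _)

theorem exp_kroneckerSum [RCLike 𝕜] (A : Matrix α α 𝕜) (B : Matrix β β 𝕜) :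
    exp (kroneckerSum A B) = exp A ⊗ₖ exp B := by
  have hcomm : Commute (A ⊗ₖ (1 : Matrix β β 𝕜)) ((1 : Matrix α α 𝕜) ⊗ₖ B) := by
    simp only [Commute, SemiconjBy, ← mul_kronecker_mul, mul_one, one_mul]
  rw [kroneckerSum, exp_add_of_commute _ _ hcomm, exp_kronecker_one, exp_one_kronecker,
    ← mul_kronecker_mul, mul_one, one_mul]

theorem submatrix_pow_of_forall_apply_eq_zero [Semiring 𝕜] (Q : Matrix α α 𝕜) {e : β → α}
    (he : Function.Injective e) (hQ : ∀ z q, z ∉ Set.range e → Q z (e q) = 0) (n : ℕ) :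
    (Q ^ n).submatrix e e = Q.submatrix e e ^ n := by
  induction n with
  | zero => exact submatrix_one e he
  | succ n ih =>
    ext p q
    rw [pow_succ, pow_succ, ← ih, submatrix_apply, mul_apply, mul_apply]
    exact (Fintype.sum_of_injective e he _ _
      (fun z hz => by rw [hQ z q hz, mul_zero]) (fun _ => rfl)).symm

theorem submatrix_exp_of_forall_apply_eq_zero [RCLike 𝕜] (Q : Matrix α α 𝕜) {e : β → α}
    (he : Function.Injective e) (hQ : ∀ z q, z ∉ Set.range e → Q z (e q) = 0) :
    (exp Q).submatrix e e = exp (Q.submatrix e e) := by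
  ext p q
  have h := hasSum_exp_apply Q (e p) (e q)
  simp only [← submatrix_apply (Q ^ _), submatrix_pow_of_forall_apply_eq_zero Q he hQ] at h
  exact h.unique (hasSum_exp_apply _ p q)

end Matrix

section SIR

variable {V : Type*} [Fintype V] [DecidableEq V] (G : SimpleGraph V) [DecidableRel G.Adj]

noncomputable def sirInfectionRate (τ : ℝ) (x : V → Fin 3) (i : V) : ℝ :=
  if x i = 0 then τ * #{j | G.Adj i j ∧ x j = 1} else 0

def sirRecoveryRate (γ : ℝ) (x : V → Fin 3) (i : V) : ℝ :=
  if x i = 1 then γ else 0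

omit [Fintype V] in
theorem forall_ne_eq_and_apply_eq_iff_eq_update {x y : V → Fin 3} {i : V} {b : Fin 3} :
    ((∀ j, j ≠ i → x j = y j) ∧ y i = b) ↔ y = Function.update x i b := by
  rw [Function.eq_update_iff]
  exact ⟨fun h => ⟨h.2, fun j hj => (h.1 j hj).symm⟩,
    fun h => ⟨fun j hj => (h.2 j hj).symm, h.1⟩⟩

theorem sirRate_eq_sum (τ γ : ℝ) (x y : V → Fin 3) :
    sirRate G τ γ x y = ∑ i, ((if y = Function.update x i 1 then sirInfectionRate G τ x i else 0)
      + if y = Function.update x i 2 then sirRecoveryRate γ x i else 0) := by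
  refine sum_congr rfl fun i _ => ?_
  simp only [sirInfectionRate, sirRecoveryRate, ← forall_ne_eq_and_apply_eq_iff_eq_update]
  congr 1 <;> split_ifs <;> tauto

theorem sirGen_apply (τ γ : ℝ) (x y : V → Fin 3) :
    sirGen G τ γ x y = ∑ i,
      (sirInfectionRate G τ x i *
          ((if y = Function.update x i 1 then 1 else 0) - if y = x then 1 else 0)
        + sirRecoveryRate γ x i *
          ((if y = Function.update x i 2 then 1 else 0) - if y = x then 1 else 0)) := by
  by_cases hxy : x = y
  · subst hxy
    have hself : sirRate G τ γ x x = 0 := by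
      refine (sirRate_eq_sum G τ γ x x).trans (sum_eq_zero fun i _ => ?_)
      simp only [sirInfectionRate, sirRecoveryRate, eq_comm (a := x), Function.update_eq_self_iff]
      split_ifs <;> simp_all
    have hexit : ∑ z, sirRate G τ γ x z =
        ∑ i, (sirInfectionRate G τ x i + sirRecoveryRate γ x i) := by
      simp only [sirRate_eq_sum]
      rw [sum_comm]
      simp [sum_add_distrib]
    rw [sirGen, if_pos rfl, sum_erase _ hself, hexit, ← sum_neg_distrib]
    refine sum_congr rfl fun i _ => ?_
    simp only [sirInfectionRate, sirRecoveryRate, neg_add_rev, eq_comm (a := x),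
      Function.update_eq_self_iff, ↓reduceIte, ite_mul, zero_mul]
    split_ifs <;> simp_all
  · simp [sirGen, hxy, Ne.symm hxy, sirRate_eq_sum, mul_ite]

theorem sirGen_eq_zero_of_apply_ne_zero_of_apply_eq_zero (τ γ : ℝ) {x y : V → Fin 3} {i : V}
    (hx : x i ≠ 0) (hy : y i = 0) : sirGen G τ γ x y = 0 := by
  have hyx : y ≠ x := fun h => hx (h ▸ hy)
  have hupd : ∀ k, ∀ b ≠ 0, y ≠ Function.update x k b := fun k b hb h => by
    have := congrFun h i
    rw [hy, Function.update_apply] at this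
    split_ifs at this <;> simp_all
  rw [sirGen_apply]
  exact sum_eq_zero fun k _ => by simp [hupd k 1 (by decide), hupd k 2 (by decide), hyx]

end SIR

/-- The configurations of the open triplet with susceptible middle node, indexed by the states
of the two leaves. -/
def middleS (p : Fin 3 × Fin 3) : Fin 3 → Fin 3 := ![p.1, 0, p.2]

/-- Sub-generator of one leaf while the middle node is susceptible: an infected leaf recovers at
rate `γ`, and at rate `τ` it infects the middle node, which then leaves the range of `middleS`
for good. -/
def leafGen (τ γ : ℝ) : Matrix (Fin 3) (Fin 3) ℝ :=
  !![0, 0, 0; 0, -(τ + γ), γ; 0, 0, 0]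

theorem middleS_injective : Function.Injective middleS :=
  fun _ _ h => Prod.ext (congrFun h 0) (congrFun h 2)

theorem middleS_eq {x : Fin 3 → Fin 3} (h : x 1 = 0) : middleS (x 0, x 2) = x := by
  funext i; fin_cases i <;> simp [middleS, h]

theorem middleS_ne_update_one {x : Fin 3 → Fin 3} {b : Fin 3} (hb : b ≠ 0)
    (q : Fin 3 × Fin 3) : middleS q ≠ Function.update x 1 b :=
  fun h => hb (by simpa [middleS] using (congrFun h 1).symm)

theorem update_middleS_zero (p : Fin 3 × Fin 3) (a : Fin 3) :
    Function.update (middleS p) 0 a = middleS (a, p.2) := by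
  funext i; fin_cases i <;> rfl

theorem update_middleS_two (p : Fin 3 × Fin 3) (c : Fin 3) :
    Function.update (middleS p) 2 c = middleS (p.1, c) := by
  funext i; fin_cases i <;> rfl

theorem sirInfectionRate_openTriplet_middleS (τ : ℝ) (p : Fin 3 × Fin 3) (i : Fin 3) :
    sirInfectionRate openTriplet τ (middleS p) i =
      if i = 1 then τ * ((if p.1 = 1 then 1 else 0) + if p.2 = 1 then 1 else 0) else 0 := by
  rw [sirInfectionRate, natCast_card_filter, Fin.sum_univ_three]
  fin_cases i <;> simp [middleS, openTriplet]

theorem sirGen_openTriplet_submatrix_middleS (τ γ : ℝ) :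
    (sirGen openTriplet τ γ).submatrix middleS middleS =
      Matrix.kroneckerSum (leafGen τ γ) (leafGen τ γ) := by
  ext ⟨a, c⟩ ⟨b, d⟩
  simp only [Matrix.submatrix_apply, sirGen_apply, Fin.sum_univ_three,
    sirInfectionRate_openTriplet_middleS, sirRecoveryRate, update_middleS_zero,
    update_middleS_two, middleS_injective.eq_iff, middleS_ne_update_one one_ne_zero,
    middleS_ne_update_one (show (2 : Fin 3) ≠ 0 by decide), Matrix.kroneckerSum,
    Matrix.add_apply, Matrix.kroneckerMap_apply]
  fin_cases a <;> fin_cases c <;> fin_cases b <;> fin_cases d <;> simp [middleS, leafGen] <;> ring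

theorem sirP_openTriplet_middleS (τ γ : ℝ) {x0 : Fin 3 → Fin 3} (hx0 : x0 1 = 0) (t : ℝ)
    (q : Fin 3 × Fin 3) :
    sirP openTriplet τ γ x0 t (middleS q) =
      exp (t • leafGen τ γ) (x0 0) q.1 * exp (t • leafGen τ γ) (x0 2) q.2 := by
  have hclosed : ∀ z q, z ∉ Set.range middleS → (t • sirGen openTriplet τ γ) z (middleS q) = 0 :=
    fun z q hz => by
      rw [Matrix.smul_apply, sirGen_eq_zero_of_apply_ne_zero_of_apply_eq_zero openTriplet τ γ
        (i := 1) (fun h => hz ⟨_, middleS_eq h⟩) rfl, smul_zero]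
  calc sirP openTriplet τ γ x0 t (middleS q)
      = (exp (t • sirGen openTriplet τ γ)).submatrix middleS middleS (x0 0, x0 2) q := by
        rw [sirP, Matrix.submatrix_apply, middleS_eq hx0]
    _ = exp (Matrix.kroneckerSum (t • leafGen τ γ) (t • leafGen τ γ)) (x0 0, x0 2) q := by
        rw [Matrix.submatrix_exp_of_forall_apply_eq_zero _ middleS_injective hclosed,
          Matrix.submatrix_smul, Pi.smul_apply, Pi.smul_apply, sirGen_openTriplet_submatrix_middleS,
          Matrix.smul_kroneckerSum]
    _ = _ := by rw [Matrix.exp_kroneckerSum, Matrix.kroneckerMap_apply]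

theorem sum_filter_eq_sum_filter_middleS {M : Type*} [AddCommMonoid M]
    (r : (Fin 3 → Fin 3) → Prop) [DecidablePred r] (hr : ∀ x, r x → x 1 = 0)
    (g : (Fin 3 → Fin 3) → M) :
    ∑ x with r x, g x = ∑ q with r (middleS q), g (middleS q) := by
  refine (sum_nbij' middleS (fun x => (x 0, x 2)) (fun q hq => by simpa using hq) (fun x hx => ?_)
    (fun q _ => rfl) (fun x hx => middleS_eq (hr x (mem_filter.1 hx).2)) fun _ _ => rfl).symm
  rw [mem_filter] at hx ⊢
  exact ⟨mem_univ _, by rw [middleS_eq (hr x hx.2)]; exact hx.2⟩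

theorem sir_openTriplet_closure_exact_middle_S_general
    (τ γ : ℝ)
    (x0 : Fin 3 → Fin 3) (hx0 : x0 1 = 0)
    (A C : Fin 3) (t : ℝ) :
    sirP3 openTriplet τ γ x0 0 1 2 A 0 C t * sirP1 openTriplet τ γ x0 1 0 t
      = sirP2 openTriplet τ γ x0 0 1 A 0 t * sirP2 openTriplet τ γ x0 1 2 0 C t := by
  have hP := sirP_openTriplet_middleS τ γ hx0 t
  set N := exp (t • leafGen τ γ)
  have h3 : sirP3 openTriplet τ γ x0 0 1 2 A 0 C t = N (x0 0) A * N (x0 2) C := by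
    rw [sirP3, sum_filter_eq_sum_filter_middleS _ fun x h => h.2.1]
    simp only [hP]
    simp [middleS, sum_filter, Fintype.sum_prod_type, ite_and]
  have h1 : sirP1 openTriplet τ γ x0 1 0 t = (∑ a, N (x0 0) a) * ∑ c, N (x0 2) c := by
    rw [sirP1, sum_filter_eq_sum_filter_middleS _ fun x h => h]
    simp only [hP]
    simp [middleS, Fintype.sum_prod_type, sum_mul_sum]
  have h12 : sirP2 openTriplet τ γ x0 0 1 A 0 t = N (x0 0) A * ∑ c, N (x0 2) c := by
    rw [sirP2, sum_filter_eq_sum_filter_middleS _ fun x h => h.2]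
    simp only [hP]
    simp [middleS, sum_filter, Fintype.sum_prod_type, mul_sum]
  have h23 : sirP2 openTriplet τ γ x0 1 2 0 C t = (∑ a, N (x0 0) a) * N (x0 2) C := by
    rw [sirP2, sum_filter_eq_sum_filter_middleS _ fun x h => h.1]
    simp only [hP]
    simp [middleS, sum_filter, Fintype.sum_prod_type, sum_mul]
  rw [h3, h1, h12, h23]
  ring

/-- For Markovian SIR dynamics on the open triplet started with the middle node susceptible,
the unclustered closure is exact on all states whose middle node is susceptible. -/
theorem sir_openTriplet_closure_exact_middle_S
    (τ γ : ℝ) (hτ : 0 < τ) (hγ : 0 < γ)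
    (x0 : Fin 3 → Fin 3) (hx0 : x0 1 = 0)
    (A C : Fin 3) (t : ℝ) (ht : 0 ≤ t) :
    sirP3 openTriplet τ γ x0 0 1 2 A 0 C t * sirP1 openTriplet τ γ x0 1 0 t
      = sirP2 openTriplet τ γ x0 0 1 A 0 t * sirP2 openTriplet τ γ x0 1 2 0 C t :=
  sir_openTriplet_closure_exact_middle_S_general τ γ x0 hx0 A C t
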